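/- arXiv:1607.06711 — 6 statements merged into one kernel-verified Lean document; each statement's English description precedes it below -/
import Mathlib

section
/- Let T : M_{n1}(ℂ) → M_{n2}(ℂ) be a completely positive operator and let T̃ : M_{n1·n2}(ℂ) → M_{n1·n2}(ℂ) be the operator obtained from T by the squaring construction. Then cap(T̃) = cap(T)^{n1}. -/
open Matrix BigOperators
open scoped ComplexOrder

/-- The capacity of an operator `T : M_I(ℂ) → M_J(ℂ)`:
`cap(T) = inf { det((|J|/|I|) • T(X)) : X positive definite, det X = 1 }`. -/
noncomputable def capacity {I J : Type} [Fintype I] [DecidableEq I] [Fintype J] [DecidableEq J]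
    (T : Matrix I I ℂ → Matrix J J ℂ) : ℝ :=
  sInf { r : ℝ | ∃ X : Matrix I I ℂ, X.PosDef ∧ X.det = 1 ∧
    r = ((((Fintype.card J : ℂ) / (Fintype.card I : ℂ)) • T X).det).re }

/-- The squaring construction: given `T : M_{n1}(ℂ) → M_{n2}(ℂ)`, view
`X ∈ M_{n1 n2}(ℂ)` as an `n2 × n2` block matrix with `n1 × n1` blocks `X_{i,j}`
and set `T̃(X) = I_{n1} ⊗ ((1/n1) • ∑ i, T (X_{i,i}))`. -/
noncomputable def squareOp {n1 n2 : ℕ}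
    (T : Matrix (Fin n1) (Fin n1) ℂ → Matrix (Fin n2) (Fin n2) ℂ)
    (X : Matrix (Fin n2 × Fin n1) (Fin n2 × Fin n1) ℂ) :
    Matrix (Fin n2 × Fin n1) (Fin n2 × Fin n1) ℂ :=
  Matrix.reindex (Equiv.prodComm (Fin n1) (Fin n2)) (Equiv.prodComm (Fin n1) (Fin n2))
    (Matrix.kroneckerMap (· * ·) (1 : Matrix (Fin n1) (Fin n1) ℂ)
      ((n1 : ℂ)⁻¹ • ∑ k : Fin n2, T (Matrix.of fun a b => X (k, a) (k, b))))

open scoped Kronecker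

/-!
Let `Z` be the average of the diagonal blocks of `X`. By linearity `T̃(X) = I ⊗ (n2/n1) T(Z)`,
so `det T̃(X) = det((n2/n1) T(Z))^n1`. The block diagonal matrices `diag(Y, …, Y)` realise every
value `det((n2/n1) T(Y))^n1`, which gives `cap T̃ ≤ (cap T)^n1`. Conversely, writing
`diag(Z, …, Z) = Bᴴ B`, AM-GM for the eigenvalues of `B⁻ᴴ X B⁻¹` (whose trace is `n1 n2`)
gives `det X ≤ (det Z)^n2`, so `det Z ≥ 1` when `det X = 1`; rescaling `Z` to determinant one
can then only decrease `det((n2/n1) T(Z))`, since `T` is linear and positive.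
-/

theorem natCast_div_self_pow_self {K : Type*} [DivisionRing K] [CharZero K] (n : ℕ) :
    ((n : K) / n) ^ n = 1 := by
  rcases eq_or_ne n 0 with rfl | hn <;> simp [*]

theorem Complex.re_pow_of_nonneg {z : ℂ} (hz : 0 ≤ z) (n : ℕ) : (z ^ n).re = z.re ^ n := by
  have h : z = z.re := Complex.eq_re_of_ofReal_le (r := 0) (by simpa using hz)
  rw [h, ← Complex.ofReal_pow, Complex.ofReal_re, Complex.ofReal_re]

theorem Real.prod_le_arith_mean_pow {ι : Type*} (s : Finset ι) (z : ι → ℝ)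
    (hz : ∀ i ∈ s, 0 ≤ z i) : ∏ i ∈ s, z i ≤ ((∑ i ∈ s, z i) / s.card) ^ s.card := by
  rcases s.eq_empty_or_nonempty with rfl | hs
  · simp
  have hN : (0 : ℝ) < s.card := by exact_mod_cast hs.card_pos
  have amgm := geom_mean_le_arith_mean_weighted s (fun _ => (s.card : ℝ)⁻¹) z
    (fun _ _ => by positivity) (by simp [hN.ne']) hz
  calc ∏ i ∈ s, z i = (∏ i ∈ s, z i ^ (s.card : ℝ)⁻¹) ^ s.card := by
        rw [← Finset.prod_pow]
        refine Finset.prod_congr rfl fun i hi => ?_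
        rw [← rpow_natCast, ← rpow_mul (hz i hi), inv_mul_cancel₀ hN.ne', rpow_one]
    _ ≤ ((∑ i ∈ s, z i) / s.card) ^ s.card := by
        gcongr
        · exact Finset.prod_nonneg fun i hi => rpow_nonneg (hz i hi) _
        · simpa [← Finset.mul_sum, div_eq_inv_mul] using amgm

theorem Real.sInf_eq_sInf_pow {S T : Set ℝ} {n : ℕ} (hS : S.Nonempty) (hS0 : ∀ s ∈ S, 0 ≤ s)
    (hST : ∀ s ∈ S, s ^ n ∈ T) (hTS : ∀ t ∈ T, ∃ s ∈ S, s ^ n ≤ t) : sInf T = sInf S ^ n := by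
  have hSbdd : BddBelow S := ⟨0, hS0⟩
  have hTbdd : BddBelow T := ⟨0, fun t ht => by
    obtain ⟨s, hs, hst⟩ := hTS t ht
    exact (pow_nonneg (hS0 s hs) n).trans hst⟩
  apply le_antisymm
  · rw [MonotoneOn.map_csInf_of_continuousWithinAt (continuous_pow n).continuousWithinAt
      (pow_left_monotoneOn.mono hS0) hS hSbdd]
    exact csInf_le_csInf hTbdd (hS.image _) (Set.image_subset_iff.2 hST)
  · obtain ⟨s, hs⟩ := hS
    refine le_csInf ⟨_, hST s hs⟩ fun t ht => ?_
    obtain ⟨s', hs', hst⟩ := hTS t ht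
    exact (pow_le_pow_left₀ (le_csInf ⟨s, hs⟩ hS0) (csInf_le hSbdd hs') n).trans hst

namespace Matrix

section

variable {ι : Type*} [Fintype ι] [DecidableEq ι]

theorem PosSemidef.det_le_trace_div_card_pow {A : Matrix ι ι ℂ} (hA : A.PosSemidef) :
    A.det ≤ (A.trace / Fintype.card ι) ^ Fintype.card ι := by
  rw [hA.isHermitian.det_eq_prod_eigenvalues, hA.isHermitian.trace_eq_sum_eigenvalues]
  have amgm := Real.prod_le_arith_mean_pow Finset.univ _ fun i _ => hA.eigenvalues_nonneg i
  rw [Finset.card_univ] at amgm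
  simp only [RCLike.ofReal_eq_complex_ofReal]
  exact_mod_cast amgm

open scoped MatrixOrder in
theorem PosDef.det_le_of_trace_inv_mul_eq_card {X W : Matrix ι ι ℂ} (hX : X.PosDef)
    (hW : W.PosDef) (htr : (W⁻¹ * X).trace = Fintype.card ι) : X.det ≤ W.det := by
  obtain ⟨B, rfl⟩ := CStarAlgebra.nonneg_iff_eq_star_mul_self.mp hW.posSemidef.nonneg
  rw [star_eq_conjTranspose] at hW htr ⊢
  have hBdet : B.det ≠ 0 := by
    have h := hW.det_pos.ne'
    rw [det_mul] at h
    exact right_ne_zero_of_mul h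
  have hB : IsUnit B := (isUnit_iff_isUnit_det B).2 hBdet.isUnit
  set M := B⁻¹ᴴ * X * B⁻¹
  have hM : M.PosDef :=
    hX.conjTranspose_mul_mul_same (mulVec_injective_of_isUnit (isUnit_nonsing_inv_iff.2 hB))
  have htrM : M.trace = Fintype.card ι := by
    rw [← htr, trace_mul_cycle, mul_inv_rev, conjTranspose_nonsing_inv]
  have hdet : X.det = (Bᴴ * B).det * M.det := by
    have : star B.det ≠ 0 := star_ne_zero.2 hBdet
    simp only [M, det_mul, det_conjTranspose, det_nonsing_inv, Ring.inverse_eq_inv', star_inv₀]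
    field_simp
  have hM1 : M.det ≤ 1 := by
    simpa [htrM, natCast_div_self_pow_self] using hM.posSemidef.det_le_trace_div_card_pow
  calc X.det = (Bᴴ * B).det * M.det := hdet
    _ ≤ (Bᴴ * B).det := mul_le_of_le_one_right hW.det_pos.le hM1

theorem exists_real_smul_det_eq_one_of_one_le_det [Nonempty ι] {Z : Matrix ι ι ℂ}
    (h : 1 ≤ Z.det) : ∃ t : ℝ, 0 < t ∧ t ≤ 1 ∧ ((t : ℂ) • Z).det = 1 := by
  set d := Z.det.re
  have hd : Z.det = d := Complex.eq_re_of_ofReal_le (r := 1) (by simpa using h)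
  have hd1 : 1 ≤ d := by simpa using Complex.re_le_re h
  have hn : (Fintype.card ι : ℝ) ≠ 0 := by simp
  refine ⟨d ^ (-(Fintype.card ι : ℝ)⁻¹), by positivity,
    Real.rpow_le_one_of_one_le_of_nonpos hd1 (by simp), ?_⟩
  rw [det_smul, hd, ← Complex.ofReal_pow, ← Complex.ofReal_mul, ← Real.rpow_natCast,
    ← Real.rpow_mul (by positivity), neg_mul, inv_mul_cancel₀ hn, Real.rpow_neg_one,
    inv_mul_cancel₀ (by positivity), Complex.ofReal_one]

end

variable {ι κ : Type*}

def diagBlock {R : Type*} (X : Matrix (κ × ι) (κ × ι) R) (k : κ) : Matrix ι ι R :=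
  X.submatrix (Prod.mk k) (Prod.mk k)

theorem PosDef.diagBlock {X : Matrix (κ × ι) (κ × ι) ℂ} (hX : X.PosDef) (k : κ) :
    (diagBlock X k).PosDef :=
  hX.submatrix (Prod.mk_right_injective k)

@[simp]
theorem diagBlock_one_kronecker {R : Type*} [CommRing R] [DecidableEq κ] (Y : Matrix ι ι R)
    (k : κ) : diagBlock ((1 : Matrix κ κ R) ⊗ₖ Y) k = Y := by
  ext a b
  simp [diagBlock]

theorem trace_one_kronecker_mul {R : Type*} [CommRing R] [Fintype ι] [Fintype κ] [DecidableEq κ]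
    (B : Matrix ι ι R) (X : Matrix (κ × ι) (κ × ι) R) :
    ((1 : Matrix κ κ R) ⊗ₖ B * X).trace = (B * ∑ k, diagBlock X k).trace := by
  rw [Matrix.mul_sum, trace_sum]
  simp [trace, mul_apply, Fintype.sum_prod_type, one_apply, diagBlock]

variable [Fintype κ]

noncomputable def blockMean (X : Matrix (κ × ι) (κ × ι) ℂ) : Matrix ι ι ℂ :=
  (Fintype.card κ : ℂ)⁻¹ • ∑ k, diagBlock X k

variable [Nonempty κ]

theorem blockMean_one_kronecker [DecidableEq κ] (Y : Matrix ι ι ℂ) :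
    blockMean ((1 : Matrix κ κ ℂ) ⊗ₖ Y) = Y := by
  rw [blockMean]
  simp only [diagBlock_one_kronecker, Finset.sum_const, Finset.card_univ,
    ← Nat.cast_smul_eq_nsmul ℂ, smul_smul]
  rw [inv_mul_cancel₀ (by simp), one_smul]

theorem PosDef.blockMean [Fintype ι] {X : Matrix (κ × ι) (κ × ι) ℂ} (hX : X.PosDef) :
    (Matrix.blockMean X).PosDef :=
  (posDef_sum Finset.univ_nonempty fun k _ => hX.diagBlock k).smul (by positivity)

variable [Fintype ι] [DecidableEq ι] [DecidableEq κ]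

theorem PosDef.det_le_det_blockMean_pow {X : Matrix (κ × ι) (κ × ι) ℂ}
    (hX : X.PosDef) : X.det ≤ (Matrix.blockMean X).det ^ Fintype.card κ := by
  set Z := Matrix.blockMean X
  have hZ : Z.PosDef := hX.blockMean
  have hsum : ∑ k, Matrix.diagBlock X k = (Fintype.card κ : ℂ) • Z := by
    simp [Z, Matrix.blockMean, smul_smul]
  have htr : (((1 : Matrix κ κ ℂ) ⊗ₖ Z)⁻¹ * X).trace = Fintype.card (κ × ι) := by
    rw [inv_kronecker, inv_one, trace_one_kronecker_mul, hsum, Matrix.mul_smul,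
      nonsing_inv_mul _ ((isUnit_iff_isUnit_det Z).1 hZ.isUnit), trace_smul, trace_one,
      Fintype.card_prod]
    push_cast; rfl
  simpa [det_kronecker] using hX.det_le_of_trace_inv_mul_eq_card (PosDef.one.kronecker hZ) htr

theorem PosDef.one_le_det_blockMean {X : Matrix (κ × ι) (κ × ι) ℂ}
    (hX : X.PosDef) (hdet : X.det = 1) : 1 ≤ (Matrix.blockMean X).det := by
  have hpos := hX.blockMean.det_pos
  have hle := hX.det_le_det_blockMean_pow
  rw [hdet] at hle
  set z := (Matrix.blockMean X).det
  have hz : z = z.re := Complex.eq_re_of_ofReal_le (r := 0) (by simpa using hpos.le)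
  rw [hz] at hle hpos ⊢
  norm_cast at hle hpos ⊢
  exact (one_le_pow_iff_of_nonneg hpos.le Fintype.card_ne_zero).1 hle

end Matrix

section SquareOp

variable {n1 n2 : ℕ}

theorem capacity_eq_sInf_det {I : Type} [Fintype I] [DecidableEq I]
    (T : Matrix I I ℂ → Matrix I I ℂ) :
    capacity T = sInf {r | ∃ X : Matrix I I ℂ, X.PosDef ∧ X.det = 1 ∧ r = (T X).det.re} := by
  simp only [capacity, det_smul, natCast_div_self_pow_self, one_mul]

theorem det_squareOp (T : Matrix (Fin n1) (Fin n1) ℂ → Matrix (Fin n2) (Fin n2) ℂ)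
    (X : Matrix (Fin n2 × Fin n1) (Fin n2 × Fin n1) ℂ) :
    (squareOp T X).det = ((n1 : ℂ)⁻¹ • ∑ k, T (diagBlock X k)).det ^ n1 := by
  rw [squareOp, det_reindex_self, det_kronecker, det_one, one_pow, one_mul, Fintype.card_fin]
  rfl

theorem det_squareOp_linearMap (hn2 : n2 ≠ 0)
    (L : Matrix (Fin n1) (Fin n1) ℂ →ₗ[ℂ] Matrix (Fin n2) (Fin n2) ℂ)
    (X : Matrix (Fin n2 × Fin n1) (Fin n2 × Fin n1) ℂ) :
    (squareOp L X).det = (((n2 : ℂ) / n1) • L (blockMean X)).det ^ n1 := by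
  have hscalar : (n2 : ℂ) / n1 * (n2 : ℂ)⁻¹ = (n1 : ℂ)⁻¹ := by field_simp
  rw [det_squareOp, blockMean, map_smul, map_sum, smul_smul, Fintype.card_fin, hscalar]

theorem exists_posDef_det_eq_one_det_map_le {ι κ : Type*} [Fintype ι] [DecidableEq ι]
    [Nonempty ι] [Fintype κ] [DecidableEq κ] (L : Matrix ι ι ℂ →ₗ[ℂ] Matrix κ κ ℂ)
    (hL : ∀ Y, Y.PosSemidef → (L Y).PosSemidef) {c : ℂ} (hc : 0 ≤ c) {Z : Matrix ι ι ℂ}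
    (hZ : Z.PosDef) (h : 1 ≤ Z.det) :
    ∃ Y : Matrix ι ι ℂ, Y.PosDef ∧ Y.det = 1 ∧ (c • L Y).det ≤ (c • L Z).det := by
  obtain ⟨t, ht0, ht1, htdet⟩ := exists_real_smul_det_eq_one_of_one_le_det h
  refine ⟨(t : ℂ) • Z, hZ.smul (Complex.zero_lt_real.2 ht0), htdet, ?_⟩
  rw [map_smul, smul_comm, det_smul]
  exact mul_le_of_le_one_left ((hL Z hZ.posSemidef).smul hc).det_nonneg
    (by exact_mod_cast pow_le_one₀ ht0.le ht1)

theorem capacity_squareOp_of_posSemidef (hn1 : 0 < n1) (hn2 : 0 < n2)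
    (L : Matrix (Fin n1) (Fin n1) ℂ →ₗ[ℂ] Matrix (Fin n2) (Fin n2) ℂ)
    (hL : ∀ Y, Y.PosSemidef → (L Y).PosSemidef) :
    capacity (squareOp L) = capacity L ^ n1 := by
  have : NeZero n1 := ⟨hn1.ne'⟩
  have : NeZero n2 := ⟨hn2.ne'⟩
  have hc : 0 ≤ (n2 : ℂ) / n1 := div_nonneg (Nat.cast_nonneg _) (Nat.cast_nonneg _)
  set f : Matrix (Fin n1) (Fin n1) ℂ → ℂ := fun Y => (((n2 : ℂ) / n1) • L Y).det
  have hf : ∀ Y, Y.PosSemidef → 0 ≤ f Y := fun Y hY => ((hL Y hY).smul hc).det_nonneg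
  have hcap : capacity L = sInf {r | ∃ Y, Y.PosDef ∧ Y.det = 1 ∧ r = (f Y).re} := by
    simp only [capacity, Fintype.card_fin]
    rfl
  rw [capacity_eq_sInf_det, hcap]
  refine Real.sInf_eq_sInf_pow ⟨_, 1, PosDef.one, det_one, rfl⟩ ?_ ?_ ?_
  · rintro _ ⟨Y, hY, -, rfl⟩
    simpa using Complex.re_le_re (hf Y hY.posSemidef)
  · rintro _ ⟨Y, hY, hdet, rfl⟩
    refine ⟨1 ⊗ₖ Y, PosDef.one.kronecker hY, by simp [det_kronecker, hdet], ?_⟩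
    rw [det_squareOp_linearMap hn2.ne', blockMean_one_kronecker,
      Complex.re_pow_of_nonneg (hf Y hY.posSemidef)]
  · rintro _ ⟨X, hX, hdet, rfl⟩
    obtain ⟨Y, hY, hYdet, hle⟩ := exists_posDef_det_eq_one_det_map_le L hL hc hX.blockMean
      (hX.one_le_det_blockMean hdet)
    refine ⟨_, ⟨Y, hY, hYdet, rfl⟩, ?_⟩
    rw [det_squareOp_linearMap hn2.ne', Complex.re_pow_of_nonneg (hf _ hX.blockMean.posSemidef)]
    gcongr
    simpa using Complex.re_le_re (hf Y hY.posSemidef)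

end SquareOp

def krausMap {m n p : Type*} [Fintype m] [Fintype p] (A : p → Matrix n m ℂ) :
    Matrix m m ℂ →ₗ[ℂ] Matrix n n ℂ where
  toFun X := ∑ i, A i * X * (A i)ᴴ
  map_add' X Y := by simp [Matrix.mul_add, Matrix.add_mul, Finset.sum_add_distrib]
  map_smul' c X := by simp [Finset.smul_sum]

theorem krausMap_posSemidef {m n p : Type*} [Fintype m] [Fintype n] [Fintype p]
    (A : p → Matrix n m ℂ) {X : Matrix m m ℂ} (hX : X.PosSemidef) : (krausMap A X).PosSemidef :=
  posSemidef_sum Finset.univ fun i _ => hX.mul_mul_conjTranspose_same (A i)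

/-- If `T : M_{n1}(ℂ) → M_{n2}(ℂ)` is completely positive and `T̃` is its
squaring, then `cap(T̃) = cap(T)^{n1}`. -/
theorem capacity_squareOp {n1 n2 m : ℕ} (hn1 : 0 < n1) (hn2 : 0 < n2)
    (A : Fin m → Matrix (Fin n2) (Fin n1) ℂ)
    (T : Matrix (Fin n1) (Fin n1) ℂ → Matrix (Fin n2) (Fin n2) ℂ)
    (hT : ∀ X, T X = ∑ i, A i * X * (A i)ᴴ) :
    capacity (squareOp T) = capacity T ^ n1 := by
  obtain rfl : T = krausMap A := funext hT
  exact capacity_squareOp_of_posSemidef hn1 hn2 _ fun _ => krausMap_posSemidef A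
end

section
/- Let T : M_{n1}(ℂ) → M_{n2}(ℂ) be a completely positive operator and let T̃ : M_{n1·n2}(ℂ) → M_{n1·n2}(ℂ) be the operator obtained from T by the squaring construction. Then T is fractional-rank non-decreasing if and only if T̃ is rank non-decreasing, i.e., rank(T̃(X)) ≥ rank(X) for every positive semidefinite X ∈ M_{n1·n2}(ℂ). -/
/-! `T̃(X)` is `((1/n1) • T(tr₁ X)) ⊗ I_{n1}`, where `tr₁ X = ∑ₖ X_{k,k}` is the partial trace over
the block index, so `rank T̃(X) = n1 · rank T(tr₁ X)`. For positive semidefinite `X`, a vector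
killed by `I_{n2} ⊗ tr₁ X` has each block killed by the corresponding diagonal block `X_{k,k}`,
hence (writing `X = B*B`) is killed by `X`; thus `rank X ≤ n2 · rank (tr₁ X)`, which gives the
forward direction. Conversely, `X = I_{n2} ⊗ Y` has `rank X = n2 · rank Y` and `tr₁ X = n2 • Y`. -/

open Matrix BigOperators
open scoped ComplexOrder

open Module
open scoped Kronecker

theorem TensorProduct.finrank_range_map {K V W V' W' : Type*} [Field K]
    [AddCommGroup V] [Module K V] [AddCommGroup W] [Module K W]
    [AddCommGroup V'] [Module K V'] [AddCommGroup W'] [Module K W']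
    [FiniteDimensional K V'] [FiniteDimensional K W'] (f : V →ₗ[K] V') (g : W →ₗ[K] W') :
    finrank K (LinearMap.range (map f g)) =
      finrank K (LinearMap.range f) * finrank K (LinearMap.range g) := by
  have hfactor : map f g =
      mapIncl (LinearMap.range f) (LinearMap.range g) ∘ₗ map f.rangeRestrict g.rangeRestrict := by
    rw [← map_comp]; rfl
  rw [hfactor, LinearMap.range_comp_of_range_eq_top _ (LinearMap.range_eq_top.mpr
      (map_surjective f.surjective_rangeRestrict g.surjective_rangeRestrict)),
    LinearMap.finrank_range_of_inj (Module.Flat.tensorProduct_mapIncl_injective_of_right _ _),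
    finrank_tensorProduct]

namespace Matrix

variable {K l m n p : Type*} [Field K]

theorem rank_kronecker [Fintype l] [Fintype m] [Fintype n] [Fintype p] [DecidableEq m]
    [DecidableEq p] (A : Matrix l m K) (B : Matrix n p K) :
    (A ⊗ₖ B).rank = A.rank * B.rank := by
  rw [rank_eq_finrank_range_toLin _ ((Pi.basisFun K l).tensorProduct (Pi.basisFun K n))
      ((Pi.basisFun K m).tensorProduct (Pi.basisFun K p)), toLin_kronecker,
    TensorProduct.finrank_range_map, ← rank_eq_finrank_range_toLin, ← rank_eq_finrank_range_toLin]

theorem rank_smul_le [Fintype m] [Fintype n] (c : K) (A : Matrix m n K) :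
    (c • A).rank ≤ A.rank := by
  classical
  simpa only [smul_mul, Matrix.one_mul] using rank_mul_le_right (c • (1 : Matrix m m K)) A

theorem rank_le_rank_of_ker_le [Fintype n] {A : Matrix l n K} {B : Matrix m n K}
    (h : LinearMap.ker A.mulVecLin ≤ LinearMap.ker B.mulVecLin) : B.rank ≤ A.rank := by
  have hA := LinearMap.finrank_range_add_finrank_ker A.mulVecLin
  have hB := LinearMap.finrank_range_add_finrank_ker B.mulVecLin
  have := Submodule.finrank_mono h
  rw [rank, rank]
  omega

theorem one_kronecker_mulVec_eq_zero_iff [Fintype l] [Fintype n] [DecidableEq l]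
    (D : Matrix m n K) (v : l × n → K) :
    (1 ⊗ₖ D : Matrix (l × m) (l × n) K) *ᵥ v = 0 ↔ ∀ i, D *ᵥ (fun b => v (i, b)) = 0 := by
  have happly : ∀ i a, ((1 ⊗ₖ D : Matrix (l × m) (l × n) K) *ᵥ v) (i, a) =
      (D *ᵥ fun b => v (i, b)) a := by
    intro i a
    simp [mulVec, dotProduct, Fintype.sum_prod_type, one_apply, ite_mul]
  simp only [funext_iff, Prod.forall, happly, Pi.zero_apply]

theorem mulVec_eq_sum_submatrix_mulVec [Fintype l] [Fintype n] {R : Type*}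
    [NonUnitalNonAssocSemiring R] (B : Matrix m (l × n) R) (v : l × n → R) :
    B *ᵥ v = ∑ i, B.submatrix id (Prod.mk i) *ᵥ (fun b => v (i, b)) := by
  ext c
  simp [mulVec, dotProduct, Fintype.sum_prod_type]

def partialTraceLeft {R ι : Type*} [AddCommMonoid R] [Fintype ι]
    (X : Matrix (ι × m) (ι × n) R) : Matrix m n R :=
  ∑ i, X.submatrix (Prod.mk i) (Prod.mk i)

theorem partialTraceLeft_one_kronecker {S : Type*} [Semiring S] [Fintype l] [DecidableEq l]
    (Y : Matrix m n S) : partialTraceLeft (1 ⊗ₖ Y : Matrix (l × m) (l × n) S) =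
      Fintype.card l • Y := by
  ext a b
  simp [partialTraceLeft, sum_apply]

end Matrix

namespace Matrix.PosSemidef

open scoped MatrixOrder

variable {𝕜 ι κ : Type*} [RCLike 𝕜] [Fintype ι]

theorem partialTraceLeft {X : Matrix (ι × κ) (ι × κ) 𝕜} (hX : X.PosSemidef) :
    X.partialTraceLeft.PosSemidef :=
  posSemidef_sum _ fun i _ => hX.submatrix (Prod.mk i)

variable [Fintype κ]

theorem mulVec_eq_zero_of_sum_mulVec_eq_zero {X : ι → Matrix κ κ 𝕜} (hX : ∀ i, (X i).PosSemidef)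
    {v : κ → 𝕜} (hv : (∑ i, X i) *ᵥ v = 0) (i : ι) : X i *ᵥ v = 0 := by
  have hsum : ∑ j, star v ⬝ᵥ X j *ᵥ v = 0 := by
    simp only [← dotProduct_sum, ← sum_mulVec, hv, dotProduct_zero]
  rw [← (hX i).dotProduct_mulVec_zero_iff]
  exact (Finset.sum_eq_zero_iff_of_nonneg fun j _ => (hX j).dotProduct_mulVec_nonneg v).mp hsum i
    (Finset.mem_univ i)

theorem mulVec_eq_zero_of_forall_submatrix_mulVec_eq_zero {X : Matrix (ι × κ) (ι × κ) 𝕜}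
    (hX : X.PosSemidef) {v : ι × κ → 𝕜}
    (hv : ∀ i, X.submatrix (Prod.mk i) (Prod.mk i) *ᵥ (fun b => v (i, b)) = 0) :
    X *ᵥ v = 0 := by
  classical
  obtain ⟨B, rfl⟩ := CStarAlgebra.nonneg_iff_eq_star_mul_self.mp hX.nonneg
  have hBv : B *ᵥ v = 0 := by
    rw [mulVec_eq_sum_submatrix_mulVec]
    refine Finset.sum_eq_zero fun i _ => ?_
    rw [← conjTranspose_mul_self_mulVec_eq_zero]
    exact hv i
  rw [← mulVec_mulVec, hBv, mulVec_zero]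

theorem rank_le_card_mul_rank_partialTraceLeft {X : Matrix (ι × κ) (ι × κ) 𝕜}
    (hX : X.PosSemidef) : X.rank ≤ Fintype.card ι * X.partialTraceLeft.rank := by
  classical
  rw [← rank_one (R := 𝕜) (n := ι), ← rank_kronecker]
  refine rank_le_rank_of_ker_le fun v hv => ?_
  rw [LinearMap.mem_ker, mulVecLin_apply, one_kronecker_mulVec_eq_zero_iff] at hv
  rw [LinearMap.mem_ker, mulVecLin_apply]
  exact hX.mulVec_eq_zero_of_forall_submatrix_mulVec_eq_zero fun i =>
    mulVec_eq_zero_of_sum_mulVec_eq_zero (fun j => hX.submatrix _) (hv i) i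

end Matrix.PosSemidef

section squareOp

variable {n1 n2 : ℕ} (T : Matrix (Fin n1) (Fin n1) ℂ →+ Matrix (Fin n2) (Fin n2) ℂ)

theorem squareOp_eq_kronecker (X : Matrix (Fin n2 × Fin n1) (Fin n2 × Fin n1) ℂ) :
    squareOp T X = ((n1 : ℂ)⁻¹ • T X.partialTraceLeft) ⊗ₖ 1 := by
  ext ⟨k, a⟩ ⟨l, b⟩
  simp [squareOp, partialTraceLeft, submatrix, one_apply]

theorem rank_squareOp (X : Matrix (Fin n2 × Fin n1) (Fin n2 × Fin n1) ℂ) :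
    (squareOp T X).rank = n1 * (T X.partialTraceLeft).rank := by
  rw [squareOp_eq_kronecker, rank_kronecker, rank_one, Fintype.card_fin, mul_comm]
  rcases eq_or_ne n1 0 with rfl | hn1
  · simp
  · rw [rank_smul_of_mem_nonZeroDivisors _ (mem_nonZeroDivisors_of_ne_zero (by simpa))]

end squareOp

theorem squareOp_rank_nondecreasing_iff_general {n1 n2 m : ℕ}
    (A : Fin m → Matrix (Fin n2) (Fin n1) ℂ)
    (T : Matrix (Fin n1) (Fin n1) ℂ → Matrix (Fin n2) (Fin n2) ℂ)
    (hT : ∀ X, T X = ∑ i, A i * X * (A i)ᴴ) :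
    (∀ X : Matrix (Fin n1) (Fin n1) ℂ, X.PosSemidef → n2 * X.rank ≤ n1 * (T X).rank) ↔
    (∀ X : Matrix (Fin n2 × Fin n1) (Fin n2 × Fin n1) ℂ, X.PosSemidef →
      X.rank ≤ (squareOp T X).rank) := by
  obtain ⟨T, rfl⟩ : ∃ T' : Matrix (Fin n1) (Fin n1) ℂ →+ Matrix (Fin n2) (Fin n2) ℂ, ⇑T' = T :=
    ⟨AddMonoidHom.mk' T fun X Y => by
      simp only [hT, Matrix.mul_add, Matrix.add_mul, Finset.sum_add_distrib], rfl⟩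
  refine ⟨fun h X hX => ?_, fun h Y hY => ?_⟩
  · calc X.rank ≤ n2 * X.partialTraceLeft.rank := by
          simpa only [Fintype.card_fin] using hX.rank_le_card_mul_rank_partialTraceLeft
      _ ≤ n1 * (T X.partialTraceLeft).rank := h _ hX.partialTraceLeft
      _ = (squareOp T X).rank := (rank_squareOp T X).symm
  · have hrank := h (1 ⊗ₖ Y) (PosSemidef.one.kronecker hY)
    rw [rank_kronecker, rank_one, rank_squareOp, partialTraceLeft_one_kronecker, Fintype.card_fin,
      map_nsmul, ← Nat.cast_smul_eq_nsmul ℂ] at hrank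
    exact hrank.trans (Nat.mul_le_mul_left _ (rank_smul_le _ _))

/-- A completely positive operator `T : M_{n1}(ℂ) → M_{n2}(ℂ)` is
fractional-rank non-decreasing (`rank(T X)/n2 ≥ rank X / n1` on PSD matrices) if and
only if its squaring `T̃` is rank non-decreasing (`rank(T̃ X) ≥ rank X` on PSD matrices). -/
theorem squareOp_rank_nondecreasing_iff {n1 n2 m : ℕ} (hn1 : 0 < n1) (hn2 : 0 < n2)
    (A : Fin m → Matrix (Fin n2) (Fin n1) ℂ)
    (T : Matrix (Fin n1) (Fin n1) ℂ → Matrix (Fin n2) (Fin n2) ℂ)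
    (hT : ∀ X, T X = ∑ i, A i * X * (A i)ᴴ) :
    (∀ X : Matrix (Fin n1) (Fin n1) ℂ, X.PosSemidef → n2 * X.rank ≤ n1 * (T X).rank) ↔
    (∀ X : Matrix (Fin n2 × Fin n1) (Fin n2 × Fin n1) ℂ, X.PosSemidef →
      X.rank ≤ (squareOp T X).rank) :=
  squareOp_rank_nondecreasing_iff_general A T hT
end

section
/- Let T : M_{n1}(ℂ) → M_{n2}(ℂ) be a completely positive operator with dual T*. Then cap(T)^{1/n2} = (n2/n1)·cap(T*)^{1/n1}. -/
open Matrix BigOperators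
open scoped ComplexOrder

/-! For positive definite `X`, `Y` of determinant one, AM–GM on the eigenvalues of `T(X) Y`
gives `det(T(X))^(1/n₂) = det(T(X) Y)^(1/n₂) ≤ tr(T(X) Y) / n₂ = tr(X T*(Y)) / n₂`, while the
infimum of `tr(X M) / n₁` over `det X = 1` is `det(M)^(1/n₁)`: it is attained at
`X = det(M)^(1/n₁) M⁻¹` for invertible `M` and approached through `M + δ • 1` otherwise. Taking
infima over `X` and then `Y` bounds `cap(T)^(1/n₂)` by `(n₂/n₁) cap(T*)^(1/n₁)`; the same argument
with `T` and `T*` exchanged gives the reverse bound. -/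

namespace Matrix

variable {n : Type*} [Fintype n] [DecidableEq n]

lemma PosSemidef.det_re_rpow_le_trace_re_div [Nonempty n] {M : Matrix n n ℂ}
    (hM : M.PosSemidef) :
    M.det.re ^ (Fintype.card n : ℝ)⁻¹ ≤ M.trace.re / Fintype.card n := by
  have h := Real.geom_mean_le_arith_mean Finset.univ (fun _ => 1) hM.1.eigenvalues
    (fun _ _ => zero_le_one) (by simpa using Fintype.card_pos)
    (fun i _ => hM.eigenvalues_nonneg i)
  rw [hM.1.det_eq_prod_eigenvalues, hM.1.trace_eq_sum_eigenvalues]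
  simpa [← Complex.ofReal_prod, ← Complex.ofReal_sum] using h

open scoped MatrixOrder in
lemma PosSemidef.det_mul_re_rpow_le_trace_mul_re_div [Nonempty n] {M Y : Matrix n n ℂ}
    (hM : M.PosSemidef) (hY : Y.PosSemidef) :
    (M * Y).det.re ^ (Fintype.card n : ℝ)⁻¹ ≤ (M * Y).trace.re / Fintype.card n := by
  obtain ⟨B, rfl⟩ := CStarAlgebra.nonneg_iff_eq_star_mul_self.mp hY.nonneg
  have hdet : (M * (star B * B)).det = (B * M * Bᴴ).det := by
    simp only [det_mul, star_eq_conjTranspose]; ring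
  have htrace : (M * (star B * B)).trace = (B * M * Bᴴ).trace := by
    rw [star_eq_conjTranspose, ← Matrix.mul_assoc, trace_mul_comm (M * Bᴴ), Matrix.mul_assoc]
  rw [hdet, htrace]
  exact (hM.mul_mul_conjTranspose_same B).det_re_rpow_le_trace_re_div

lemma PosDef.exists_det_eq_one_trace_mul_re_div [Nonempty n] {N : Matrix n n ℂ}
    (hN : N.PosDef) :
    ∃ X : Matrix n n ℂ, X.PosDef ∧ X.det = 1 ∧
      (X * N).trace.re / Fintype.card n = N.det.re ^ (Fintype.card n : ℝ)⁻¹ := by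
  obtain ⟨hdet_re, hdet_im⟩ := Complex.pos_iff.mp hN.det_pos
  have hdet : N.det = (N.det.re : ℂ) := Complex.ext rfl hdet_im.symm
  set c := N.det.re ^ (Fintype.card n : ℝ)⁻¹
  have hc : 0 < c := Real.rpow_pos_of_pos hdet_re _
  refine ⟨(c : ℂ) • N⁻¹, by simpa [Complex.coe_smul] using hN.inv.smul hc, ?_, ?_⟩
  · rw [det_smul, det_nonsing_inv, Ring.inverse_eq_inv', ← Complex.ofReal_pow,
      Real.rpow_inv_natCast_pow hdet_re.le Fintype.card_ne_zero, ← hdet]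
    exact mul_inv_cancel₀ hN.det_pos.ne'
  · rw [smul_mul, nonsing_inv_mul _ ((isUnit_iff_isUnit_det N).mp hN.isUnit), trace_smul, trace_one]
    simp [Fintype.card_ne_zero]

open Filter Topology in
lemma PosSemidef.le_det_re_rpow_of_forall_le_trace_mul_re [Nonempty n] {M : Matrix n n ℂ}
    (hM : M.PosSemidef) {a : ℝ}
    (h : ∀ X : Matrix n n ℂ, X.PosDef → X.det = 1 → a ≤ (X * M).trace.re / Fintype.card n) :
    a ≤ M.det.re ^ (Fintype.card n : ℝ)⁻¹ := by
  set f : ℝ → ℝ := fun δ => (M + (δ : ℂ) • 1).det.re ^ (Fintype.card n : ℝ)⁻¹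
  have hf : Continuous f := by
    refine Continuous.rpow_const ?_ fun _ => Or.inr (by positivity)
    fun_prop
  have hlim : Tendsto f (𝓝[>] 0) (𝓝 (M.det.re ^ (Fintype.card n : ℝ)⁻¹)) := by
    simpa [f] using (hf.tendsto 0).mono_left nhdsWithin_le_nhds
  refine ge_of_tendsto hlim (eventually_nhdsWithin_of_forall fun δ (hδ : 0 < δ) => ?_)
  have hN : (M + (δ : ℂ) • 1).PosDef := by
    simpa [Complex.coe_smul] using PosDef.posSemidef_add hM (PosDef.one.smul hδ)
  obtain ⟨X, hX, hX1, hXN⟩ := hN.exists_det_eq_one_trace_mul_re_div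
  have htrace : (X * M).trace.re ≤ (X * (M + (δ : ℂ) • 1)).trace.re := by
    have := (Complex.nonneg_iff.mp hX.posSemidef.trace_nonneg).1
    simp only [Matrix.mul_add, Matrix.mul_smul, Matrix.mul_one, trace_add, trace_smul,
      Complex.add_re, smul_eq_mul, Complex.re_ofReal_mul]
    exact le_add_of_nonneg_right (mul_nonneg hδ.le this)
  calc a ≤ (X * M).trace.re / Fintype.card n := h X hX hX1
    _ ≤ (X * (M + (δ : ℂ) • 1)).trace.re / Fintype.card n := by gcongr
    _ = f δ := hXN

lemma trace_sum_mul_mul_conjTranspose_mul {I J κ R : Type*} [Fintype I] [Fintype J] [Fintype κ]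
    [CommSemiring R] [StarRing R] (A : κ → Matrix J I R) (X : Matrix I I R) (Y : Matrix J J R) :
    ((∑ i, A i * X * (A i)ᴴ) * Y).trace = (X * ∑ i, (A i)ᴴ * Y * A i).trace := by
  simp only [Finset.sum_mul, Matrix.mul_sum, trace_sum, Matrix.mul_assoc]
  exact Finset.sum_congr rfl fun i _ => by rw [trace_mul_comm, Matrix.mul_assoc, Matrix.mul_assoc]

end Matrix

section Capacity

variable {I J : Type} [Fintype I] [DecidableEq I] [Fintype J] [DecidableEq J]
  {T : Matrix I I ℂ → Matrix J J ℂ}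

lemma nonneg_of_mem_capacity_set (hT : ∀ X, X.PosDef → (T X).PosSemidef) :
    ∀ r ∈ { r : ℝ | ∃ X : Matrix I I ℂ, X.PosDef ∧ X.det = 1 ∧
      r = ((((Fintype.card J : ℂ) / (Fintype.card I : ℂ)) • T X).det).re }, 0 ≤ r := by
  rintro _ ⟨X, hX, -, rfl⟩
  exact (Complex.nonneg_iff.mp ((hT X hX).smul (by positivity)).det_nonneg).1

lemma capacity_nonneg (hT : ∀ X, X.PosDef → (T X).PosSemidef) : 0 ≤ capacity T :=
  Real.sInf_nonneg (nonneg_of_mem_capacity_set hT)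

lemma capacity_rpow_le (hT : ∀ X, X.PosDef → (T X).PosSemidef) {X : Matrix I I ℂ}
    (hX : X.PosDef) (hX1 : X.det = 1) :
    capacity T ^ (Fintype.card J : ℝ)⁻¹ ≤
      ((((Fintype.card J : ℂ) / (Fintype.card I : ℂ)) • T X).det).re ^ (Fintype.card J : ℝ)⁻¹ :=
  Real.rpow_le_rpow (capacity_nonneg hT)
    (csInf_le ⟨0, nonneg_of_mem_capacity_set hT⟩ ⟨X, hX, hX1, rfl⟩) (by positivity)

lemma le_capacity_rpow [Nonempty J] (hT : ∀ X, X.PosDef → (T X).PosSemidef) {a : ℝ}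
    (ha : 0 ≤ a) (h : ∀ X : Matrix I I ℂ, X.PosDef → X.det = 1 →
      a ≤ ((((Fintype.card J : ℂ) / (Fintype.card I : ℂ)) • T X).det).re ^
        (Fintype.card J : ℝ)⁻¹) :
    a ≤ capacity T ^ (Fintype.card J : ℝ)⁻¹ := by
  rw [Real.le_rpow_inv_iff_of_pos ha (capacity_nonneg hT) (by positivity)]
  refine le_csInf ⟨_, 1, PosDef.one, det_one, rfl⟩ ?_
  rintro _ ⟨X, hX, hX1, rfl⟩
  exact (Real.le_rpow_inv_iff_of_pos ha (nonneg_of_mem_capacity_set hT _ ⟨X, hX, hX1, rfl⟩)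
    (by positivity)).mp (h X hX hX1)

theorem capacity_rpow_le_of_trace_adjoint [Nonempty I] [Nonempty J]
    {S : Matrix J J ℂ → Matrix I I ℂ} (hT : ∀ X, X.PosDef → (T X).PosSemidef)
    (hS : ∀ Y, Y.PosDef → (S Y).PosSemidef) (hTS : ∀ X Y, (T X * Y).trace = (X * S Y).trace) :
    (Fintype.card I / Fintype.card J : ℝ) * capacity T ^ (Fintype.card J : ℝ)⁻¹ ≤
      capacity S ^ (Fintype.card I : ℝ)⁻¹ := by
  refine le_capacity_rpow hS
    (mul_nonneg (by positivity) (Real.rpow_nonneg (capacity_nonneg hT) _)) fun Y hY hY1 => ?_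
  refine ((hS Y hY).smul (by positivity)).le_det_re_rpow_of_forall_le_trace_mul_re
    fun X hX hX1 => ?_
  have hTXY := ((hT X hX).smul (by positivity : (0 : ℂ) ≤ Fintype.card J / Fintype.card I)
    ).det_mul_re_rpow_le_trace_mul_re_div hY.posSemidef
  rw [det_mul, hY1, mul_one] at hTXY
  calc (Fintype.card I / Fintype.card J : ℝ) * capacity T ^ (Fintype.card J : ℝ)⁻¹
      ≤ (Fintype.card I / Fintype.card J : ℝ) *
          ((((Fintype.card J : ℂ) / Fintype.card I) • T X * Y).trace.re / Fintype.card J) := by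
        gcongr
        exact (capacity_rpow_le hT hX hX1).trans hTXY
    _ = (X * (((Fintype.card I : ℂ) / Fintype.card J) • S Y)).trace.re / Fintype.card I := by
        rw [smul_mul, mul_smul_comm, trace_smul, trace_smul, hTS]
        simp only [smul_eq_mul, Complex.mul_re, Complex.div_natCast_re, Complex.natCast_re,
          Complex.div_natCast_im, Complex.natCast_im, zero_div, zero_mul, sub_zero]
        field_simp

theorem capacity_rpow_eq_of_trace_adjoint [Nonempty I] [Nonempty J]
    {S : Matrix J J ℂ → Matrix I I ℂ} (hT : ∀ X, X.PosDef → (T X).PosSemidef)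
    (hS : ∀ Y, Y.PosDef → (S Y).PosSemidef) (hTS : ∀ X Y, (T X * Y).trace = (X * S Y).trace) :
    capacity T ^ (Fintype.card J : ℝ)⁻¹ =
      (Fintype.card J / Fintype.card I : ℝ) * capacity S ^ (Fintype.card I : ℝ)⁻¹ := by
  have hST : ∀ Y X, (S Y * X).trace = (Y * T X).trace := fun Y X => by
    rw [trace_mul_comm, ← hTS, trace_mul_comm]
  refine le_antisymm ?_ (capacity_rpow_le_of_trace_adjoint hS hT hST)
  calc capacity T ^ (Fintype.card J : ℝ)⁻¹
      = (Fintype.card J / Fintype.card I : ℝ) *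
          ((Fintype.card I / Fintype.card J : ℝ) * capacity T ^ (Fintype.card J : ℝ)⁻¹) := by
        field_simp
    _ ≤ (Fintype.card J / Fintype.card I : ℝ) * capacity S ^ (Fintype.card I : ℝ)⁻¹ := by
        gcongr
        exact capacity_rpow_le_of_trace_adjoint hT hS hTS

end Capacity

/-- For a completely positive operator `T : M_{n1}(ℂ) → M_{n2}(ℂ)`
with Kraus operators `A₁, …, A_m` and dual `T*`, one has
`cap(T)^{1/n2} = (n2/n1) · cap(T*)^{1/n1}`. -/
theorem capacity_dual {n1 n2 m : ℕ} (hn1 : 0 < n1) (hn2 : 0 < n2)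
    (A : Fin m → Matrix (Fin n2) (Fin n1) ℂ) :
    capacity (fun X : Matrix (Fin n1) (Fin n1) ℂ => ∑ i, A i * X * (A i)ᴴ) ^ ((n2 : ℝ)⁻¹) =
      ((n2 : ℝ) / (n1 : ℝ)) *
        capacity (fun Y : Matrix (Fin n2) (Fin n2) ℂ => ∑ i, (A i)ᴴ * Y * A i) ^ ((n1 : ℝ)⁻¹) := by
  have : Nonempty (Fin n1) := ⟨⟨0, hn1⟩⟩
  have : Nonempty (Fin n2) := ⟨⟨0, hn2⟩⟩
  simpa using capacity_rpow_eq_of_trace_adjoint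
    (fun X hX => posSemidef_sum _ fun i _ => hX.posSemidef.mul_mul_conjTranspose_same (A i))
    (fun Y hY => posSemidef_sum _ fun i _ => hY.posSemidef.conjTranspose_mul_mul_same (A i))
    (trace_sum_mul_mul_conjTranspose_mul A)
end

section
/- Let (B,p) be a Brascamp–Lieb datum with p_i = c_i/d for positive integers c_i, d, B_i : ℝ^n → ℝ^{n_i}, and n = ∑_{i=1}^m c_i n_i / d, and let T_{(B,p)} : M_{nd}(ℂ) → M_n(ℂ) be the Brascamp–Lieb operator of (B,p). Then the inequality dim(V) ≤ ∑_{j=1}^m p_j · dim(B_j V) holds for all linear subspaces V of ℝ^n if and only if the dual operator T_{(B,p)}* is fractional-rank non-decreasing, i.e., rank(T_{(B,p)}*(X))/(nd) ≥ rank(X)/n for every positive semidefinite X ∈ M_n(ℂ). -/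
open Matrix BigOperators
open scoped ComplexOrder

/-- The index set of the Brascamp–Lieb operator: the `j`-th block row of the stacked matrix
`A` corresponds to a pair `(i, t)` with `t < cᵢ`, and carries `nd i` coordinates.  The total
cardinality is `∑ cᵢ · nd i = n·d`. -/
abbrev blIndex (m : ℕ) (nd c : Fin m → ℕ) : Type := (i : Fin m) × (Fin (nd i) × Fin (c i))

/-- The dual Brascamp–Lieb operator `T_{(B,p)}^* : M_n(ℂ) → M_{nd}(ℂ)`,
`T_{(B,p)}^*(Y) = ∑_j Aⱼ Y Aⱼᴴ`, the block-diagonal matrix whose block at `(i,t)` is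
`Bᵢ Y Bᵢᴴ`. -/
noncomputable def blOpDual {m n : ℕ} (nd c : Fin m → ℕ)
    (B : ∀ i, Matrix (Fin (nd i)) (Fin n) ℝ) (Y : Matrix (Fin n) (Fin n) ℂ) :
    Matrix (blIndex m nd c) (blIndex m nd c) ℂ :=
  Matrix.blockDiagonal' fun i =>
    Matrix.blockDiagonal fun _ : Fin (c i) =>
      ((B i).map Complex.ofReal) * Y * ((B i).map Complex.ofReal)ᴴ

/-!
For PSD `X`, `rank (A X Aᴴ) = dim A(range X)`, every complex subspace is the range of a PSD
matrix, and `rank T^*(X) = ∑ cᵢ rank (Bᵢ X Bᵢᴴ)`. So fractional-rank monotonicity of `T^*` is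
the dimension condition for the maps `Bᵢ` acting on subspaces of `ℂⁿ`, and it remains to compare
it with the real one. Complexifying a real subspace preserves all the dimensions involved.
Conversely, read through real and imaginary parts, a complex subspace `W` is a real subspace of
`ℝⁿ × ℝⁿ` mapped by `Bᵢ × Bᵢ`, and the real condition passes to doubled maps: split `W` into
`W ∩ (ℝⁿ × 0)` and its second projection, whose images under `Bᵢ` have total dimension at most
`dim (Bᵢ × Bᵢ) W`.
-/

open Module Submodule

def BLDimCondition {K ι M : Type*} [Field K] [Fintype ι] {N : ι → Type*} [AddCommGroup M]
    [Module K M] [∀ j, AddCommGroup (N j)] [∀ j, Module K (N j)] (f : ∀ j, M →ₗ[K] N j)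
    (p : ι → ℝ) : Prop :=
  ∀ V : Submodule K M, (finrank K V : ℝ) ≤ ∑ j, p j * finrank K (V.map (f j))

section

variable {K : Type*} [Field K] {M N M' N' : Type*} [AddCommGroup M] [AddCommGroup N]
  [AddCommGroup M'] [AddCommGroup N'] [Module K M] [Module K N] [Module K M'] [Module K N']

theorem Submodule.finrank_eq_finrank_comap_inl_add_finrank_map_snd [FiniteDimensional K M]
    [FiniteDimensional K N] (U : Submodule K (M × N)) :
    finrank K U = finrank K (U.comap (LinearMap.inl K M N)) +
      finrank K (U.map (LinearMap.snd K M N)) := by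
  let g : U.comap (LinearMap.inl K M N) →ₗ[K] U := (LinearMap.inl K M N).restrict fun _ hx => hx
  have hg : LinearMap.range g = LinearMap.ker ((LinearMap.snd K M N).domRestrict U) := by
    ext ⟨⟨a, b⟩, hab⟩
    simpa [g] using fun hb => hb ▸ hab
  rw [← LinearMap.finrank_range_add_finrank_ker ((LinearMap.snd K M N).domRestrict U),
    LinearMap.range_domRestrict, ← hg, LinearMap.finrank_range_of_inj, add_comm]
  exact fun x y h => Subtype.ext (congrArg (fun z : U => (z : M × N).1) h)

theorem Submodule.finrank_prod [FiniteDimensional K M] [FiniteDimensional K N]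
    (p : Submodule K M) (q : Submodule K N) :
    finrank K (p.prod q) = finrank K p + finrank K q := by
  rw [finrank_eq_finrank_comap_inl_add_finrank_map_snd, prod_comap_inl, prod_map_snd]

theorem Submodule.finrank_map_comap_inl_add_finrank_map_map_snd_le [FiniteDimensional K M]
    [FiniteDimensional K N] [FiniteDimensional K M'] [FiniteDimensional K N']
    (f : M →ₗ[K] M') (g : N →ₗ[K] N') (W : Submodule K (M × N)) :
    finrank K ((W.comap (LinearMap.inl K M N)).map f) +
        finrank K ((W.map (LinearMap.snd K M N)).map g) ≤
      finrank K (W.map (f.prodMap g)) := by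
  set U := W.map (f.prodMap g)
  have hinl : (W.comap (LinearMap.inl K M N)).map f ≤ U.comap (LinearMap.inl K M' N') := by
    rintro _ ⟨a, ha, rfl⟩
    exact ⟨(a, 0), ha, by simp⟩
  have hsnd : U.map (LinearMap.snd K M' N') = (W.map (LinearMap.snd K M N)).map g := by
    rw [← Submodule.map_comp, ← Submodule.map_comp]
    rfl
  rw [U.finrank_eq_finrank_comap_inl_add_finrank_map_snd, hsnd]
  exact Nat.add_le_add_right (Submodule.finrank_mono hinl) _

theorem BLDimCondition.prodMap {ι : Type*} [Fintype ι] {P : ι → Type*}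
    [∀ j, AddCommGroup (P j)] [∀ j, Module K (P j)] [FiniteDimensional K M]
    [∀ j, FiniteDimensional K (P j)] {f : ∀ j, M →ₗ[K] P j} {p : ι → ℝ} (hp : ∀ j, 0 ≤ p j) (h : BLDimCondition f p) :
    BLDimCondition (fun j => (f j).prodMap (f j)) p := by
  intro W
  set W₁ := W.comap (LinearMap.inl K M M)
  set W₂ := W.map (LinearMap.snd K M M)
  calc (finrank K W : ℝ) = finrank K W₁ + finrank K W₂ := by
        rw [W.finrank_eq_finrank_comap_inl_add_finrank_map_snd, Nat.cast_add]
    _ ≤ ∑ j, p j * finrank K (W₁.map (f j)) + ∑ j, p j * finrank K (W₂.map (f j)) :=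
        add_le_add (h W₁) (h W₂)
    _ = ∑ j, p j * (finrank K (W₁.map (f j)) + finrank K (W₂.map (f j)) : ℕ) := by
        simp only [Nat.cast_add, mul_add, Finset.sum_add_distrib]
    _ ≤ ∑ j, p j * finrank K (W.map ((f j).prodMap (f j))) := by
        gcongr with j
        · exact hp j
        · exact finrank_map_comap_inl_add_finrank_map_map_snd_le (f j) (f j) W

end

section

variable {ι κ : Type*}

variable (ι) in
noncomputable def reImEquiv : (ι → ℂ) ≃ₗ[ℝ] (ι → ℝ) × (ι → ℝ) where
  toFun z := (fun i => (z i).re, fun i => (z i).im)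
  invFun x := fun i => ⟨x.1 i, x.2 i⟩
  left_inv _ := rfl
  right_inv _ := rfl
  map_add' _ _ := rfl
  map_smul' _ _ := by ext <;> simp

noncomputable def Submodule.reIm (W : Submodule ℂ (ι → ℂ)) : Submodule ℝ ((ι → ℝ) × (ι → ℝ)) :=
  (W.restrictScalars ℝ).map (reImEquiv ι).toLinearMap

def Submodule.complexify (V : Submodule ℝ (ι → ℝ)) : Submodule ℂ (ι → ℂ) where
  carrier := {z | (fun i => (z i).re) ∈ V ∧ (fun i => (z i).im) ∈ V}
  add_mem' := fun ⟨hre, him⟩ ⟨hre', him'⟩ => ⟨V.add_mem hre hre', V.add_mem him him'⟩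
  zero_mem' := ⟨V.zero_mem, V.zero_mem⟩
  smul_mem' c z := fun ⟨hre, him⟩ => by
    constructor
    · convert V.sub_mem (V.smul_mem c.re hre) (V.smul_mem c.im him) using 1
      ext i; simp
    · convert V.add_mem (V.smul_mem c.re him) (V.smul_mem c.im hre) using 1
      ext i; simp

theorem Submodule.finrank_reIm [Finite ι] (W : Submodule ℂ (ι → ℂ)) :
    finrank ℝ W.reIm = 2 * finrank ℂ W := by
  rw [reIm, LinearEquiv.finrank_map_eq,
    ((W.restrictScalarsEquiv ℝ ℂ).restrictScalars ℝ).finrank_eq,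
    ← Module.finrank_mul_finrank ℝ ℂ W, Complex.finrank_real_complex]

theorem Submodule.reIm_complexify (V : Submodule ℝ (ι → ℝ)) : V.complexify.reIm = V.prod V := by
  ext x
  simp only [reIm, mem_map_equiv]
  exact Iff.rfl

theorem reImEquiv_mulVec [Fintype ι] (A : Matrix κ ι ℝ) (z : ι → ℂ) :
    reImEquiv κ (A.map Complex.ofReal *ᵥ z) =
      (A.mulVecLin.prodMap A.mulVecLin) (reImEquiv ι z) := by
  ext i <;> simp [reImEquiv, Matrix.mulVec, dotProduct, Complex.re_sum, Complex.im_sum]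

theorem Submodule.reIm_map [Fintype ι] (A : Matrix κ ι ℝ) (W : Submodule ℂ (ι → ℂ)) :
    (W.map (A.map Complex.ofReal).mulVecLin).reIm =
      W.reIm.map (A.mulVecLin.prodMap A.mulVecLin) := by
  simp only [reIm, restrictScalars_map, ← Submodule.map_comp]
  congr 1
  exact LinearMap.ext (reImEquiv_mulVec A)

theorem Submodule.finrank_complexify_map [Fintype ι] [Finite κ] (A : Matrix κ ι ℝ)
    (V : Submodule ℝ (ι → ℝ)) :
    finrank ℂ (V.complexify.map (A.map Complex.ofReal).mulVecLin) =
      finrank ℝ (V.map A.mulVecLin) := by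
  have h := congrArg (fun U : Submodule ℝ _ => finrank ℝ U) (V.complexify.reIm_map A)
  rw [finrank_reIm, reIm_complexify, LinearMap.prodMap_map_prod, finrank_prod] at h
  omega

theorem Submodule.finrank_complexify [Finite ι] (V : Submodule ℝ (ι → ℝ)) :
    finrank ℂ V.complexify = finrank ℝ V := by
  have h := V.complexify.finrank_reIm
  rw [reIm_complexify, finrank_prod] at h
  omega

end

section

variable {ι J : Type*} [Fintype ι] [Fintype J] {κ : J → Type*} [∀ j, Finite (κ j)]
  {B : ∀ j, Matrix (κ j) ι ℝ} {p : J → ℝ}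

theorem BLDimCondition.map_ofReal (hp : ∀ j, 0 ≤ p j)
    (h : BLDimCondition (fun j => (B j).mulVecLin) p) :
    BLDimCondition (fun j => ((B j).map Complex.ofReal).mulVecLin) p := by
  intro W
  have h2 := h.prodMap hp W.reIm
  have hmap : ∀ j, finrank ℝ (W.reIm.map ((B j).mulVecLin.prodMap (B j).mulVecLin)) =
      2 * finrank ℂ (W.map ((B j).map Complex.ofReal).mulVecLin) := fun j => by
    rw [← reIm_map, finrank_reIm]
  simp only [hmap, finrank_reIm, Nat.cast_mul, Nat.cast_ofNat, mul_left_comm _ (2 : ℝ),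
    ← Finset.mul_sum] at h2
  linarith

theorem BLDimCondition.of_map_ofReal
    (h : BLDimCondition (fun j => ((B j).map Complex.ofReal).mulVecLin) p) :
    BLDimCondition (fun j => (B j).mulVecLin) p := by
  intro V
  simpa only [finrank_complexify, finrank_complexify_map] using h V.complexify

theorem blDimCondition_map_ofReal_iff (hp : ∀ j, 0 ≤ p j) :
    BLDimCondition (fun j => ((B j).map Complex.ofReal).mulVecLin) p ↔
      BLDimCondition (fun j => (B j).mulVecLin) p :=
  ⟨.of_map_ofReal, .map_ofReal hp⟩

end

section

variable {R : Type*} [Semiring R] {η : Type*} {φ ψ : η → Type*}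
  [∀ i, AddCommMonoid (φ i)] [∀ i, Module R (φ i)] [∀ i, AddCommMonoid (ψ i)]
  [∀ i, Module R (ψ i)]

theorem LinearMap.range_piMap (f : ∀ i, φ i →ₗ[R] ψ i) :
    LinearMap.range (LinearMap.piMap f) =
      Submodule.pi Set.univ fun i => LinearMap.range (f i) := by
  ext y
  simp only [LinearMap.mem_range, Submodule.mem_pi, Set.mem_univ, true_implies]
  constructor
  · rintro ⟨x, rfl⟩ i
    exact ⟨x i, rfl⟩
  · intro h
    choose x hx using h
    exact ⟨x, funext hx⟩

def Submodule.piEquiv (p : ∀ i, Submodule R (φ i)) : Submodule.pi Set.univ p ≃ₗ[R] ∀ i, p i where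
  toFun x i := ⟨x.1 i, x.2 i (Set.mem_univ i)⟩
  invFun x := ⟨fun i => x i, fun i _ => (x i).2⟩
  left_inv _ := rfl
  right_inv _ := rfl
  map_add' _ _ := rfl
  map_smul' _ _ := rfl

end

theorem Submodule.finrank_pi {K : Type*} [Field K] {η : Type*} [Fintype η] {φ : η → Type*}
    [∀ i, AddCommGroup (φ i)] [∀ i, Module K (φ i)] [∀ i, FiniteDimensional K (φ i)]
    (p : ∀ i, Submodule K (φ i)) :
    finrank K (Submodule.pi Set.univ p) = ∑ i, finrank K (p i) := by
  rw [(piEquiv p).finrank_eq, Module.finrank_pi_fintype]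

namespace Matrix

variable {K : Type*} [Field K] {η : Type*} [Fintype η] [DecidableEq η] {κ μ : η → Type*}
  [∀ i, Fintype (μ i)]

theorem mulVecLin_blockDiagonal' (M : ∀ i, Matrix (κ i) (μ i) K) :
    (blockDiagonal' M).mulVecLin =
      (LinearEquiv.piCurry K fun i (_ : κ i) => K).symm.toLinearMap ∘ₗ
        LinearMap.piMap (fun i => (M i).mulVecLin) ∘ₗ
          (LinearEquiv.piCurry K fun i (_ : μ i) => K).toLinearMap := by
  ext v ⟨i, j⟩
  simp [mulVec, dotProduct, ← Finset.univ_sigma_univ, Finset.sum_sigma, blockDiagonal'_apply,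
    Sigma.uncurry, Sigma.curry]

theorem rank_blockDiagonal' [∀ i, Finite (κ i)] (M : ∀ i, Matrix (κ i) (μ i) K) :
    (blockDiagonal' M).rank = ∑ i, (M i).rank := by
  rw [rank, mulVecLin_blockDiagonal', LinearMap.range_comp, LinearMap.range_comp,
    LinearEquiv.range, Submodule.map_top, LinearMap.range_piMap, LinearEquiv.finrank_map_eq,
    Submodule.finrank_pi]
  rfl

theorem rank_blockDiagonal {κ : Type*} [Fintype κ] [DecidableEq κ] (M : η → Matrix κ κ K) :
    (blockDiagonal M).rank = ∑ i, (M i).rank := by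
  have he : (Prod.toSigma ∘ Prod.swap : κ × η → Σ _ : η, κ) =
      (Equiv.prodComm κ η).trans (Equiv.sigmaEquivProd η κ).symm := rfl
  rw [← blockDiagonal'_submatrix_eq_blockDiagonal, he, rank_submatrix, rank_blockDiagonal']

end Matrix

section

variable {𝕜 : Type*} [RCLike 𝕜] {ι κ : Type*} [Fintype ι] [Fintype κ]

theorem Matrix.range_mul_conjTranspose_self (A : Matrix κ ι 𝕜) :
    LinearMap.range (A * Aᴴ).mulVecLin = LinearMap.range A.mulVecLin := by
  refine Submodule.eq_of_le_of_finrank_eq ?_ (rank_self_mul_conjTranspose A)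
  rw [mulVecLin_mul]
  exact LinearMap.range_comp_le_range _ _

open scoped MatrixOrder in
theorem Matrix.PosSemidef.range_mul_mul_conjTranspose {X : Matrix ι ι 𝕜} (hX : X.PosSemidef)
    (A : Matrix κ ι 𝕜) :
    LinearMap.range (A * X * Aᴴ).mulVecLin = (LinearMap.range X.mulVecLin).map A.mulVecLin := by
  classical
  obtain ⟨S, rfl⟩ := CStarAlgebra.nonneg_iff_eq_star_mul_self.mp hX.nonneg
  rw [star_eq_conjTranspose]
  calc LinearMap.range (A * (Sᴴ * S) * Aᴴ).mulVecLin
      = LinearMap.range ((A * Sᴴ) * (A * Sᴴ)ᴴ).mulVecLin := by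
        simp only [conjTranspose_mul, conjTranspose_conjTranspose, Matrix.mul_assoc]
    _ = (LinearMap.range Sᴴ.mulVecLin).map A.mulVecLin := by
        rw [range_mul_conjTranspose_self, mulVecLin_mul, LinearMap.range_comp]
    _ = (LinearMap.range (Sᴴ * S).mulVecLin).map A.mulVecLin := by
        rw [← Sᴴ.range_mul_conjTranspose_self, conjTranspose_conjTranspose]

theorem Matrix.PosSemidef.rank_mul_mul_conjTranspose {X : Matrix ι ι 𝕜} (hX : X.PosSemidef)
    (A : Matrix κ ι 𝕜) :
    (A * X * Aᴴ).rank = finrank 𝕜 ((LinearMap.range X.mulVecLin).map A.mulVecLin) := by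
  rw [rank, hX.range_mul_mul_conjTranspose]

theorem Submodule.exists_posSemidef_range_eq (W : Submodule 𝕜 (ι → 𝕜)) :
    ∃ X : Matrix ι ι 𝕜, X.PosSemidef ∧ LinearMap.range X.mulVecLin = W := by
  classical
  obtain ⟨W', hW'⟩ := W.exists_isCompl
  set A := LinearMap.toMatrix' (W.projection W' hW')
  refine ⟨A * Aᴴ, posSemidef_self_mul_conjTranspose A, ?_⟩
  rw [A.range_mul_conjTranspose_self, ← Matrix.toLin'_apply', Matrix.toLin'_toMatrix',
    range_projection]

end

theorem blDimCondition_iff_forall_posSemidef {𝕜 : Type*} [RCLike 𝕜] {ι J : Type*} [Fintype ι]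
    [Fintype J] {κ : J → Type*} [∀ j, Fintype (κ j)] (A : ∀ j, Matrix (κ j) ι 𝕜) (p : J → ℝ) :
    BLDimCondition (fun j => (A j).mulVecLin) p ↔
      ∀ X : Matrix ι ι 𝕜, X.PosSemidef → (X.rank : ℝ) ≤ ∑ j, p j * (A j * X * (A j)ᴴ).rank := by
  constructor
  · intro h X hX
    simp only [hX.rank_mul_mul_conjTranspose]
    exact h (LinearMap.range X.mulVecLin)
  · intro h W
    obtain ⟨X, hX, rfl⟩ := W.exists_posSemidef_range_eq
    have hXW := h X hX
    simp only [hX.rank_mul_mul_conjTranspose] at hXW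
    exact hXW

theorem rank_blOpDual {m n : ℕ} (nd c : Fin m → ℕ) (B : ∀ i, Matrix (Fin (nd i)) (Fin n) ℝ)
    (X : Matrix (Fin n) (Fin n) ℂ) :
    (blOpDual nd c B X).rank =
      ∑ i, c i * ((B i).map Complex.ofReal * X * ((B i).map Complex.ofReal)ᴴ).rank := by
  simp only [blOpDual, rank_blockDiagonal', rank_blockDiagonal, Finset.sum_const,
    Finset.card_univ, Fintype.card_fin, smul_eq_mul]

theorem blOpDual_frac_rank_nondecreasing_iff_general {m n : ℕ} (nd c : Fin m → ℕ) (d : ℕ)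
    (hn : 0 < n) (hd : 0 < d)
    (B : ∀ i, Matrix (Fin (nd i)) (Fin n) ℝ) (p : Fin m → ℝ)
    (hp : ∀ i, p i = (c i : ℝ) / d) :
    (∀ V : Submodule ℝ (Fin n → ℝ),
        (Module.finrank ℝ V : ℝ) ≤ ∑ j, p j * Module.finrank ℝ (V.map (B j).mulVecLin)) ↔
      (∀ X : Matrix (Fin n) (Fin n) ℂ, X.PosSemidef →
        (n * d) * X.rank ≤ n * (blOpDual nd c B X).rank) := by
  have hp_nonneg : ∀ j, 0 ≤ p j := fun j => by rw [hp j]; positivity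
  have hscale : ∀ (r : ℕ) (f : Fin m → ℕ), (r : ℝ) ≤ ∑ j, p j * f j ↔ d * r ≤ ∑ j, c j * f j := by
    intro r f
    simp only [hp, div_mul_eq_mul_div, ← Finset.sum_div,
      le_div_iff₀ (Nat.cast_pos.mpr hd : (0 : ℝ) < d)]
    rw [mul_comm]
    exact_mod_cast Iff.rfl
  calc BLDimCondition (fun j => (B j).mulVecLin) p
      ↔ BLDimCondition (fun j => ((B j).map Complex.ofReal).mulVecLin) p :=
        (blDimCondition_map_ofReal_iff hp_nonneg).symm
    _ ↔ _ := blDimCondition_iff_forall_posSemidef _ p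
    _ ↔ _ := forall₂_congr fun X _ => by
        rw [hscale, rank_blOpDual, mul_assoc, Nat.mul_le_mul_left_iff hn]

/-- For a Brascamp–Lieb datum `(B, p)` with `pᵢ = cᵢ/d` and
`n = ∑ cᵢ nᵢ / d`, the inequality `dim V ≤ ∑ pⱼ dim(Bⱼ V)` holds for all subspaces
`V ⊆ ℝⁿ` iff the dual operator `T_{(B,p)}^*` is fractional-rank non-decreasing,
i.e. `rank(T^*(X))/(nd) ≥ rank(X)/n` for every PSD `X ∈ M_n(ℂ)`. -/
theorem blOpDual_frac_rank_nondecreasing_iff {m n : ℕ} (nd c : Fin m → ℕ) (d : ℕ)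
    (hn : 0 < n) (hd : 0 < d) (hc : ∀ i, 0 < c i)
    (B : ∀ i, Matrix (Fin (nd i)) (Fin n) ℝ) (p : Fin m → ℝ)
    (hp : ∀ i, p i = (c i : ℝ) / d)
    (hdim : n * d = ∑ i, c i * nd i) :
    (∀ V : Submodule ℝ (Fin n → ℝ),
        (Module.finrank ℝ V : ℝ) ≤ ∑ j, p j * Module.finrank ℝ (V.map (B j).mulVecLin)) ↔
      (∀ X : Matrix (Fin n) (Fin n) ℂ, X.PosSemidef →
        (n * d) * X.rank ≤ n * (blOpDual nd c B X).rank) :=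
  blOpDual_frac_rank_nondecreasing_iff_general nd c d hn hd B p hp
end

section
/- Let A ∈ M_n(ℂ) be a Hermitian positive semidefinite matrix with tr(A) = n, and let 0 < ε ≤ 1 be such that tr[(A − I_n)²] ≥ ε. Then det(A) ≤ exp(−ε/6). -/
/-!
Write `μᵢ ≥ 0` for the eigenvalues of `A`, so that `∑ μᵢ = n`, `∑ (μᵢ - 1)² ≥ ε` and
`det A = ∏ μᵢ`. Everything rests on `log x ≤ 2 (√x - 1)`, which is `log y ≤ y - 1` at `y = √x`.
If every `μᵢ ≤ 2`, it sharpens to `log x ≤ (x - 1) - (x - 1)² / 6`, and summing gives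
`log ∏ μᵢ ≤ -∑ (μᵢ - 1)² / 6 ≤ -ε / 6`. If some `μⱼ > 2`, the plain bound `log x ≤ x - 1` for
the other eigenvalues gives `∏ μᵢ ≤ μⱼ e^{1 - μⱼ}`, and `x e^{1 - x} ≤ e^{-1/6}` for `x ≥ 2`.
-/

open Matrix Finset
open scoped ComplexOrder

namespace Real

lemma le_exp_two_mul_sqrt_sub_one {x : ℝ} (hx : 0 ≤ x) : x ≤ exp (2 * (√x - 1)) := by
  have hsqrt : √x ≤ exp (√x - 1) := by linarith [add_one_le_exp (√x - 1)]
  calc x = √x * √x := (mul_self_sqrt hx).symm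
    _ ≤ exp (√x - 1) * exp (√x - 1) := mul_le_mul hsqrt hsqrt (sqrt_nonneg x) (exp_nonneg _)
    _ = exp (2 * (√x - 1)) := by rw [← exp_add]; ring_nf

lemma le_exp_sub_one_sub_sq_div_six {x : ℝ} (hx0 : 0 ≤ x) (hx2 : x ≤ 2) :
    x ≤ exp ((x - 1) - (x - 1) ^ 2 / 6) := by
  refine (le_exp_two_mul_sqrt_sub_one hx0).trans (exp_le_exp.2 ?_)
  have hs0 : 0 ≤ √x := sqrt_nonneg x
  have hss : √x * √x = x := mul_self_sqrt hx0
  nlinarith [sq_nonneg (√x - 1), sq_nonneg (√x * √x - 1), sq_nonneg (√x + 1)]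

lemma mul_exp_one_sub_le_exp_neg_one_div_six {x : ℝ} (hx : 2 ≤ x) :
    x * exp (1 - x) ≤ exp (-1 / 6) := by
  have hbound : x * exp (1 - x) ≤ exp (2 * (√x - 1) + (1 - x)) := by
    rw [exp_add]
    exact mul_le_mul_of_nonneg_right (le_exp_two_mul_sqrt_sub_one (by linarith)) (exp_nonneg _)
  refine hbound.trans (exp_le_exp.2 ?_)
  have hs0 : 0 ≤ √x := sqrt_nonneg x
  have hss : √x * √x = x := mul_self_sqrt (by linarith)
  -- `√x ≥ √2 > 17 / 12`, so `(√x - 1)² ≥ (5 / 12)² > 1 / 6`.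
  nlinarith [sq_nonneg (12 * √x - 17)]

lemma prod_le_exp_sum_sub_one {ι : Type*} (s : Finset ι) {μ : ι → ℝ} (hμ : ∀ i ∈ s, 0 ≤ μ i) :
    ∏ i ∈ s, μ i ≤ exp (∑ i ∈ s, (μ i - 1)) := by
  rw [exp_sum]
  exact prod_le_prod hμ fun i _ ↦ by linarith [add_one_le_exp (μ i - 1)]

theorem prod_le_exp_neg_div_six_of_le_sum_sq {ι : Type*} [Fintype ι] {μ : ι → ℝ}
    (hμ : ∀ i, 0 ≤ μ i) (hmean : ∑ i, μ i = Fintype.card ι) {ε : ℝ} (hε : ε ≤ 1)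
    (hfar : ε ≤ ∑ i, (μ i - 1) ^ 2) :
    ∏ i, μ i ≤ exp (-ε / 6) := by
  classical
  have hcentered : ∑ i, (μ i - 1) = 0 := by simp [sum_sub_distrib, hmean]
  by_cases hlarge : ∃ j, 2 < μ j
  · obtain ⟨j, hj⟩ := hlarge
    have hrest : ∑ i ∈ univ.erase j, (μ i - 1) = 1 - μ j := by
      linarith [add_sum_erase univ (fun i ↦ μ i - 1) (mem_univ j)]
    calc ∏ i, μ i = μ j * ∏ i ∈ univ.erase j, μ i := (mul_prod_erase _ _ (mem_univ j)).symm
      _ ≤ μ j * exp (1 - μ j) := by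
          rw [← hrest]
          exact mul_le_mul_of_nonneg_left (prod_le_exp_sum_sub_one _ fun i _ ↦ hμ i) (hμ j)
      _ ≤ exp (-1 / 6) := mul_exp_one_sub_le_exp_neg_one_div_six hj.le
      _ ≤ exp (-ε / 6) := exp_le_exp.2 (by linarith)
  · simp only [not_exists, not_lt] at hlarge
    calc ∏ i, μ i ≤ ∏ i, exp ((μ i - 1) - (μ i - 1) ^ 2 / 6) :=
          prod_le_prod (fun i _ ↦ hμ i)
            fun i _ ↦ le_exp_sub_one_sub_sq_div_six (hμ i) (hlarge i)
      _ = exp (-(∑ i, (μ i - 1) ^ 2) / 6) := by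
          rw [← exp_sum, sum_sub_distrib, ← sum_div, hcentered, zero_sub, neg_div]
      _ ≤ exp (-ε / 6) := exp_le_exp.2 (by linarith)

end Real

namespace Matrix.IsHermitian

variable {𝕜 n : Type*} [RCLike 𝕜] [Fintype n] [DecidableEq n] {A : Matrix n n 𝕜}

lemma trace_cfc_eq_sum_eigenvalues (hA : A.IsHermitian) (f : ℝ → ℝ) :
    (cfc f A).trace = ∑ i, (f (hA.eigenvalues i) : 𝕜) := by
  rw [hA.cfc_eq, IsHermitian.cfc, Unitary.conjStarAlgAut_apply, trace_mul_cycle,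
    Unitary.coe_star_mul_self, one_mul, trace_diagonal]
  rfl

lemma trace_sub_one_sq (hA : A.IsHermitian) :
    ((A - 1) ^ 2).trace = ∑ i, (((hA.eigenvalues i - 1) ^ 2 : ℝ) : 𝕜) := by
  rw [← hA.trace_cfc_eq_sum_eigenvalues (fun x ↦ (x - 1) ^ 2), cfc_pow .., cfc_sub .., cfc_id' ..,
    cfc_const_one ..]

end Matrix.IsHermitian

theorem det_le_exp_of_far_from_id_general {n : ℕ} (A : Matrix (Fin n) (Fin n) ℂ)
    (hA : A.PosSemidef) (htr : A.trace = (n : ℂ))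
    (ε : ℝ) (hε1 : ε ≤ 1)
    (hfar : ε ≤ (Matrix.trace ((A - 1) ^ 2)).re) :
    A.det.re ≤ Real.exp (-ε / 6) := by
  have hH := hA.isHermitian
  have hmean : ∑ i, hH.eigenvalues i = Fintype.card (Fin n) := by
    rw [hH.trace_eq_sum_eigenvalues] at htr
    simpa using congrArg Complex.re htr
  have hfar' : ε ≤ ∑ i, (hH.eigenvalues i - 1) ^ 2 := by
    rwa [hH.trace_sub_one_sq, ← RCLike.ofReal_sum] at hfar
  have hdet : A.det.re = ∏ i, hH.eigenvalues i := by
    rw [hH.det_eq_prod_eigenvalues]; norm_cast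
  rw [hdet]
  exact Real.prod_le_exp_neg_div_six_of_le_sum_sq hA.eigenvalues_nonneg hmean hε1 hfar'

/-- (Robust AM–GM.)  If `A ∈ M_n(ℂ)` is Hermitian positive semidefinite
with `tr A = n`, and `0 < ε ≤ 1` satisfies `tr[(A − I)²] ≥ ε`, then
`det A ≤ exp(−ε/6)`. -/
theorem det_le_exp_of_far_from_id {n : ℕ} (A : Matrix (Fin n) (Fin n) ℂ)
    (hA : A.PosSemidef) (htr : A.trace = (n : ℂ))
    (ε : ℝ) (hε0 : 0 < ε) (hε1 : ε ≤ 1)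
    (hfar : ε ≤ (Matrix.trace ((A - 1) ^ 2)).re) :
    A.det.re ≤ Real.exp (-ε / 6) :=
  det_le_exp_of_far_from_id_general A hA htr ε hε1 hfar
end

section
/- Let (B,p) be a feasible projection-normalized Brascamp–Lieb datum (B_j B_j† = I_{n_j} for all j) with p_j > 0 and ∑_j p_j n_j = n, and let 0 < ε ≤ 1 be such that tr[(M − I_n)²] ≥ ε, where M = ∑_j p_j B_j† B_j (M is positive definite by feasibility). Let B'' be the isotropy normalization of B, given by B''_j = B_j · M^{−1/2}. Then BL(B'', p) ≤ exp(−ε/12) · BL(B, p). -/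
open Matrix BigOperators
open scoped ComplexOrder ENNReal


lemma logA {x : ℝ} (hx : 0 < x) (hx2 : x ≤ 2) :
    Real.log x ≤ (x - 1) - (x - 1) ^ 2 / 6 := by
  have hs0 : 0 < Real.sqrt x := Real.sqrt_pos.2 hx
  have hs2 : Real.sqrt x ^ 2 = x := Real.sq_sqrt hx.le
  have hlog : Real.log x = 2 * Real.log (Real.sqrt x) := by
    rw [Real.log_sqrt hx.le]; ring
  have h1 : Real.log (Real.sqrt x) ≤ Real.sqrt x - 1 :=
    Real.log_le_sub_one_of_pos hs0
  set s := Real.sqrt x with hsdef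
  have hss : s ^ 2 ≤ 2 := by rw [hs2]; exact hx2
  have hkey : 2 * (s - 1) ≤ (x - 1) - (x - 1) ^ 2 / 6 := by
    have h6 : (0:ℝ) ≤ 6 - (s + 1) ^ 2 := by nlinarith [sq_nonneg (2 * s - 3), hs0.le]
    have hprod : (0:ℝ) ≤ (s - 1) ^ 2 * (6 - (s + 1) ^ 2) :=
      mul_nonneg (sq_nonneg _) h6
    rw [← hs2]; nlinarith [hprod]
  linarith

lemma key_sum {n : ℕ} (lam : Fin n → ℝ) (ε : ℝ)
    (hpos : ∀ i, 0 < lam i) (hsum : ∑ i, (lam i - 1) = 0)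
    (heps : ε ≤ ∑ i, (lam i - 1) ^ 2) (hε1 : ε ≤ 1) :
    ∏ i, lam i ≤ Real.exp (-ε / 6) := by
  have hlog : ∑ i, Real.log (lam i) ≤ -ε / 6 := by
    by_cases hall : ∀ i, lam i ≤ 2
    · have h1 : ∑ i, Real.log (lam i) ≤ ∑ i, ((lam i - 1) - (lam i - 1) ^ 2 / 6) :=
        Finset.sum_le_sum fun i _ => logA (hpos i) (hall i)
      have h2 : ∑ i, ((lam i - 1) - (lam i - 1) ^ 2 / 6)
          = (∑ i, (lam i - 1)) - (∑ i, (lam i - 1) ^ 2) / 6 := by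
        rw [Finset.sum_sub_distrib, ← Finset.sum_div]
      rw [h2, hsum] at h1
      linarith
    · push_neg at hall
      obtain ⟨k, hk⟩ := hall
      have hsplit : ∑ i, Real.log (lam i)
          = Real.log (lam k) + ∑ i ∈ Finset.univ.erase k, Real.log (lam i) := by
        rw [← Finset.add_sum_erase _ _ (Finset.mem_univ k)]
      have hrest : ∑ i ∈ Finset.univ.erase k, Real.log (lam i)
          ≤ ∑ i ∈ Finset.univ.erase k, (lam i - 1) :=
        Finset.sum_le_sum fun i _ => Real.log_le_sub_one_of_pos (hpos i)
      have hrest2 : ∑ i ∈ Finset.univ.erase k, (lam i - 1) = -(lam k - 1) := by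
        have := Finset.add_sum_erase Finset.univ (fun i => lam i - 1) (Finset.mem_univ k)
        beta_reduce at this
        rw [hsum] at this
        linarith
      have hlogk : Real.log (lam k) ≤ Real.log 2 + (lam k / 2 - 1) := by
        have h2 : lam k = 2 * (lam k / 2) := by ring
        have hpos2 : (0:ℝ) < lam k / 2 := by linarith
        calc Real.log (lam k) = Real.log 2 + Real.log (lam k / 2) := by
              rw [← Real.log_mul (by norm_num) (ne_of_gt hpos2), ← h2]
          _ ≤ Real.log 2 + (lam k / 2 - 1) := by
              linarith [Real.log_le_sub_one_of_pos hpos2]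
      have hl2 : Real.log 2 < 0.6931471808 := Real.log_two_lt_d9
      rw [hsplit]
      have : Real.log (lam k) + ∑ i ∈ Finset.univ.erase k, Real.log (lam i)
          ≤ Real.log 2 - lam k / 2 := by linarith
      linarith
  calc ∏ i, lam i = Real.exp (∑ i, Real.log (lam i)) := by
        rw [Real.exp_sum]
        exact Finset.prod_congr rfl fun i _ => (Real.exp_log (hpos i)).symm
    _ ≤ Real.exp (-ε / 6) := Real.exp_le_exp.2 hlog


lemma det_le_of_far {n : ℕ} {M : Matrix (Fin n) (Fin n) ℝ} (hM : M.PosSemidef)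
    (hdet : M.det ≠ 0) (htr : M.trace = (n : ℝ)) {ε : ℝ}
    (hfar : ε ≤ ((M - 1) ^ 2).trace) (hε1 : ε ≤ 1) :
    M.det ≤ Real.exp (-ε / 6) := by
  classical
  have hC : (M - 1).IsHermitian := hM.1.sub isHermitian_one
  set μ : Fin n → ℝ := hC.eigenvalues with hμdef
  set U : Matrix (Fin n) (Fin n) ℝ := (hC.eigenvectorUnitary : Matrix (Fin n) (Fin n) ℝ)
    with hUdef
  have hUU : U * star U = 1 := mem_unitaryGroup_iff.mp hC.eigenvectorUnitary.2
  have hUU' : star U * U = 1 := mem_unitaryGroup_iff'.mp hC.eigenvectorUnitary.2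
  have hspec : M - 1 = U * diagonal μ * star U := by
    have h := hC.spectral_theorem
    rwa [RCLike.ofReal_real_eq_id, Function.id_comp] at h
  set ν : Fin n → ℝ := fun i => μ i + 1 with hνdef
  have hdiag : diagonal μ + 1 = diagonal ν := by
    rw [← Matrix.diagonal_one, Matrix.diagonal_add]
  have hMspec : M = U * diagonal ν * star U := by
    have h1 : M = U * diagonal μ * star U + 1 := by
      rw [← hspec]; abel
    rw [h1, ← hUU, ← hdiag]
    rw [Matrix.mul_add, Matrix.add_mul]
    congr 1
    rw [Matrix.mul_one]
  have hUdet : U.det * (star U).det = 1 := by rw [← det_mul, hUU, det_one]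
  have hdetM : M.det = ∏ i, ν i := by
    rw [hMspec, det_mul, det_mul, det_diagonal]
    calc U.det * (∏ i, ν i) * (star U).det
        = U.det * (star U).det * ∏ i, ν i := by ring
      _ = ∏ i, ν i := by rw [hUdet, one_mul]
  -- positivity of ν
  have hdiagpsd : (diagonal ν).PosSemidef := by
    have h := hM.conjTranspose_mul_mul_same U
    rw [hMspec] at h
    simp only [Matrix.star_eq_conjTranspose] at h
    have h1 : Uᴴ * U = 1 := by rw [← Matrix.star_eq_conjTranspose]; exact hUU'
    have he : Uᴴ * (U * diagonal ν * Uᴴ) * U = diagonal ν := by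
      calc Uᴴ * (U * diagonal ν * Uᴴ) * U
          = Uᴴ * U * diagonal ν * (Uᴴ * U) := by
            simp only [Matrix.mul_assoc]
        _ = diagonal ν := by rw [h1, Matrix.one_mul, Matrix.mul_one]
    rwa [he] at h
  have hνnonneg : ∀ i, 0 ≤ ν i := posSemidef_diagonal_iff.mp hdiagpsd
  have hνne : ∀ i, ν i ≠ 0 := by
    rw [hdetM] at hdet
    exact fun i => Finset.prod_ne_zero_iff.mp hdet i (Finset.mem_univ i)
  have hνpos : ∀ i, 0 < ν i := fun i => lt_of_le_of_ne (hνnonneg i) (Ne.symm (hνne i))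
  -- trace identities
  have htrconj : ∀ d : Fin n → ℝ, (U * diagonal d * star U).trace = ∑ i, d i := by
    intro d
    rw [Matrix.trace_mul_comm, ← Matrix.mul_assoc, hUU', Matrix.one_mul, Matrix.trace_diagonal]
  have htrM : ∑ i, ν i = (n : ℝ) := by rw [← htr, hMspec, htrconj]
  have hsq : (M - 1) ^ 2 = U * diagonal (fun i => μ i ^ 2) * star U := by
    rw [sq, hspec]
    calc U * diagonal μ * star U * (U * diagonal μ * star U)
        = U * (diagonal μ * (star U * U) * diagonal μ) * star U := by
          simp only [Matrix.mul_assoc]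
      _ = U * diagonal (fun i => μ i ^ 2) * star U := by
          rw [hUU', Matrix.mul_one, Matrix.diagonal_mul_diagonal]
          congr 1
          · congr 1
            funext i
            ring
  have htrsq : ((M - 1) ^ 2).trace = ∑ i, (ν i - 1) ^ 2 := by
    rw [hsq, htrconj]
    exact Finset.sum_congr rfl fun i _ => by simp [hνdef]
  have hsum : ∑ i, (ν i - 1) = 0 := by
    rw [Finset.sum_sub_distrib, htrM]
    simp
  rw [hdetM]
  exact key_sum ν ε hνpos hsum (htrsq ▸ hfar) hε1

/-- The Brascamp–Lieb constant of the datum `(B, p)`, by Lieb's formula: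
`BL(B,p) = sup { (∏ det(Xᵢ)^{pᵢ} / det (∑ pᵢ Bᵢᵀ Xᵢ Bᵢ))^{1/2} : Xᵢ ≻ 0 }`,
valued in `ℝ≥0∞`. -/
noncomputable def BLconst {m n : ℕ} (nd : Fin m → ℕ)
    (B : ∀ i, Matrix (Fin (nd i)) (Fin n) ℝ) (p : Fin m → ℝ) : ℝ≥0∞ :=
  ⨆ (X : ∀ i, Matrix (Fin (nd i)) (Fin (nd i)) ℝ) (_ : ∀ i, (X i).PosDef),
    (ENNReal.ofReal (∏ i, (X i).det ^ p i) /
      ENNReal.ofReal ((∑ i, p i • ((B i)ᵀ * X i * B i)).det)) ^ ((1 : ℝ) / 2)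

/-- (Progress per isotropy-normalization step.)  Let `(B,p)` be a
feasible projection-normalized Brascamp–Lieb datum with `pⱼ > 0` and `∑ pⱼ nⱼ = n`, and
let `0 < ε ≤ 1` satisfy `tr[(M − I)²] ≥ ε` where `M = ∑ pⱼ Bⱼᵀ Bⱼ`.  If `B''` is the
isotropy normalization of `B`, i.e. `B''ⱼ = Bⱼ · M^{-1/2}` (where `M^{-1/2} = S⁻¹` for the
positive semidefinite square root `S` of `M`), then
`BL(B'', p) ≤ exp(−ε/12) · BL(B, p)`. -/
theorem blConst_isotropy_step {m n : ℕ} (nd : Fin m → ℕ)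
    (B : ∀ i, Matrix (Fin (nd i)) (Fin n) ℝ) (p : Fin m → ℝ)
    (hp : ∀ j, 0 < p j)
    (hfeas : BLconst nd B p < ⊤)
    (hproj : ∀ j, B j * (B j)ᵀ = 1)
    (hdim : ∑ j, p j * (nd j : ℝ) = (n : ℝ))
    (ε : ℝ) (hε0 : 0 < ε) (hε1 : ε ≤ 1)
    (hfar : ε ≤ Matrix.trace (((∑ j, p j • ((B j)ᵀ * B j)) - 1) ^ 2))
    (S : Matrix (Fin n) (Fin n) ℝ) (hS : S.PosSemidef)
    (hSS : S * S = ∑ j, p j • ((B j)ᵀ * B j))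
    (B'' : ∀ i, Matrix (Fin (nd i)) (Fin n) ℝ)
    (hB'' : ∀ j, B'' j = B j * S⁻¹) :
    BLconst nd B'' p ≤ ENNReal.ofReal (Real.exp (-ε / 12)) * BLconst nd B p := by
  classical
  set M : Matrix (Fin n) (Fin n) ℝ := ∑ j, p j • ((B j)ᵀ * B j) with hMdef
  have hMpsd : M.PosSemidef := by
    have h := Matrix.posSemidef_self_mul_conjTranspose S
    rw [hS.1] at h
    rwa [hSS] at h
  -- M has nonzero determinant, else BLconst B = ⊤
  have hdetM : M.det ≠ 0 := by
    intro h0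
    have hXone : ∀ i : Fin m, (1 : Matrix (Fin (nd i)) (Fin (nd i)) ℝ).PosDef :=
      fun i => Matrix.PosDef.one
    have hterm : ((ENNReal.ofReal (∏ i, ((1 : Matrix (Fin (nd i)) (Fin (nd i)) ℝ)).det ^ p i) /
        ENNReal.ofReal ((∑ i, p i • ((B i)ᵀ * (1 : Matrix (Fin (nd i)) (Fin (nd i)) ℝ) * B i)).det))
          ^ ((1 : ℝ) / 2)) ≤ BLconst nd B p := by
      rw [BLconst]
      refine le_iSup_of_le (fun i => 1) ?_
      rw [iSup_pos hXone]
    have hden : (∑ i, p i • ((B i)ᵀ * (1 : Matrix (Fin (nd i)) (Fin (nd i)) ℝ) * B i)) = M := by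
      rw [hMdef]
      exact Finset.sum_congr rfl fun i _ => by rw [Matrix.mul_one]
    rw [hden, h0] at hterm
    simp only [Matrix.det_one, Real.one_rpow, Finset.prod_const_one, ENNReal.ofReal_one,
      ENNReal.ofReal_zero] at hterm
    rw [ENNReal.div_zero one_ne_zero, ENNReal.top_rpow_of_pos (by norm_num)] at hterm
    exact absurd (lt_of_le_of_lt hterm hfeas) (lt_irrefl _)
  -- determinant of S
  have hdSnonneg : 0 ≤ S.det := by
    rw [hS.1.det_eq_prod_eigenvalues]
    exact Finset.prod_nonneg fun i _ => hS.eigenvalues_nonneg i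
  have hSSdet : S.det * S.det = M.det := by rw [← det_mul, hSS]
  have hdSne : S.det ≠ 0 := by
    intro h0
    rw [h0, mul_zero] at hSSdet
    exact hdetM hSSdet.symm
  have hdS : 0 < S.det := lt_of_le_of_ne hdSnonneg (Ne.symm hdSne)
  -- trace of M
  have htrM : M.trace = (n : ℝ) := by
    rw [hMdef, Matrix.trace_sum]
    rw [← hdim]
    refine Finset.sum_congr rfl fun j _ => ?_
    rw [Matrix.trace_smul, Matrix.trace_mul_comm, hproj j, Matrix.trace_one]
    simp [smul_eq_mul]
  -- det M ≤ exp (-ε/6)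
  have hdetle : M.det ≤ Real.exp (-ε / 6) := det_le_of_far hMpsd hdetM htrM hfar hε1
  -- det S ≤ exp (-ε/12)
  have hdSle : S.det ≤ Real.exp (-ε / 12) := by
    have hee : Real.exp (-ε / 12) * Real.exp (-ε / 12) = Real.exp (-ε / 6) := by
      rw [← Real.exp_add]; ring_nf
    nlinarith [Real.exp_pos (-ε / 12), hdS]
  -- transformation identity
  have hSsymm : Sᵀ = S := by
    rw [← Matrix.conjTranspose_eq_transpose_of_trivial]; exact hS.1
  have hSinvT : (S⁻¹)ᵀ = S⁻¹ := by rw [Matrix.transpose_nonsing_inv, hSsymm]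
  have hdSinv : S⁻¹.det = S.det⁻¹ := by
    rw [Matrix.det_nonsing_inv, Ring.inverse_eq_inv']
  set c : ℝ≥0∞ := ENNReal.ofReal (S.det ^ 2) with hcdef
  have hc0 : c ≠ 0 := by
    rw [hcdef]
    simp only [ne_eq, ENNReal.ofReal_eq_zero, not_le]
    positivity
  have hctop : c ≠ ⊤ := ENNReal.ofReal_ne_top
  have hcroot : c ^ ((1 : ℝ) / 2) = ENNReal.ofReal S.det := by
    rw [hcdef, ENNReal.ofReal_rpow_of_pos (by positivity)]
    congr 1
    rw [← Real.rpow_natCast S.det 2, ← Real.rpow_mul hdSnonneg]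
    norm_num
  -- pointwise identity for the denominator
  have hden : ∀ (X : ∀ i, Matrix (Fin (nd i)) (Fin (nd i)) ℝ),
      (∑ i, p i • ((B'' i)ᵀ * X i * (B'' i))).det
        = (S.det ^ 2)⁻¹ * (∑ i, p i • ((B i)ᵀ * X i * (B i))).det := by
    intro X
    have hsum : (∑ i, p i • ((B'' i)ᵀ * X i * (B'' i)))
        = S⁻¹ * (∑ i, p i • ((B i)ᵀ * X i * (B i))) * S⁻¹ := by
      rw [Matrix.mul_sum, Matrix.sum_mul]
      refine Finset.sum_congr rfl fun i _ => ?_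
      rw [hB'' i, Matrix.transpose_mul, hSinvT]
      rw [Matrix.mul_smul, Matrix.smul_mul]
      congr 1
      simp only [Matrix.mul_assoc]
    rw [hsum, det_mul, det_mul, hdSinv]
    rw [pow_two, mul_inv]
    ring
  -- pointwise bound
  have hpoint : ∀ (X : ∀ i, Matrix (Fin (nd i)) (Fin (nd i)) ℝ),
      (ENNReal.ofReal (∏ i, (X i).det ^ p i) /
        ENNReal.ofReal ((∑ i, p i • ((B'' i)ᵀ * X i * (B'' i))).det)) ^ ((1 : ℝ) / 2)
      = ENNReal.ofReal S.det *
        (ENNReal.ofReal (∏ i, (X i).det ^ p i) /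
          ENNReal.ofReal ((∑ i, p i • ((B i)ᵀ * X i * (B i))).det)) ^ ((1 : ℝ) / 2) := by
    intro X
    set a : ℝ≥0∞ := ENNReal.ofReal (∏ i, (X i).det ^ p i)
    set b : ℝ≥0∞ := ENNReal.ofReal ((∑ i, p i • ((B i)ᵀ * X i * (B i))).det)
    have h1 : ENNReal.ofReal ((∑ i, p i • ((B'' i)ᵀ * X i * (B'' i))).det) = c⁻¹ * b := by
      rw [hden X, ENNReal.ofReal_mul (by positivity), hcdef,
        ENNReal.ofReal_inv_of_pos (by positivity)]
    rw [h1]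
    have h2 : a / (c⁻¹ * b) = c * (a / b) := by
      rw [div_eq_mul_inv, div_eq_mul_inv,
        ENNReal.mul_inv (Or.inl (ENNReal.inv_ne_zero.mpr hctop))
          (Or.inl (ENNReal.inv_ne_top.mpr hc0)), inv_inv]
      ring
    rw [h2, ENNReal.mul_rpow_of_nonneg _ _ (by norm_num), hcroot]
  -- conclude
  calc BLconst nd B'' p
      ≤ ENNReal.ofReal S.det * BLconst nd B p := by
        rw [BLconst]
        refine iSup₂_le fun X hX => ?_
        rw [hpoint X]
        refine mul_le_mul_right ?_ _
        rw [BLconst]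
        exact le_iSup₂ (f := fun X (_ : ∀ i, (X i).PosDef) =>
          (ENNReal.ofReal (∏ i, (X i).det ^ p i) /
            ENNReal.ofReal ((∑ i, p i • ((B i)ᵀ * X i * (B i))).det)) ^ ((1 : ℝ) / 2)) X hX
    _ ≤ ENNReal.ofReal (Real.exp (-ε / 12)) * BLconst nd B p :=
        mul_le_mul_left (ENNReal.ofReal_le_ofReal hdSle) _
end
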